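/- arXiv:1801.04947 — 6 statements merged into one kernel-verified Lean document; each statement's English description precedes it below -/
import Mathlib

section
/- For the 2×2 matrix polynomials G(x,y) = [[1 - y - x_1², x_1 x_2],[x_1 x_2, y - x_2²]] and Q(x,z) = [[1 + z x_2, z - 2 x_1],[z - 2 x_1, 1 - z x_2]], one has the projection identity P_G = {(x_1,x_2) ∈ R² : |x_1 + x_2| ≤ 1 and |x_1 − x_2| ≤ 1}. -/
/-!
Write `s = 1 - x₁² - x₂²` for the (constant) trace of `G(x, y)`. The diagonal entries are
`s - t` and `t` with `t = y - x₂²`, so some `y` makes `G` positive semidefinite iff some split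
of `s` into two nonnegative parts has product at least `(x₁x₂)²`; the best split is `s/2 + s/2`,
so this happens iff `2|x₁x₂| ≤ s`, i.e. `(|x₁| + |x₂|)² ≤ 1`. Finally
`|x₁| + |x₂| = max |x₁ + x₂| |x₁ - x₂|`.
-/

namespace Matrix

lemma posSemidef_fin_two_iff {a b c : ℝ} :
    (!![a, b; b, c] : Matrix (Fin 2) (Fin 2) ℝ).PosSemidef ↔ 0 ≤ a ∧ 0 ≤ c ∧ b ^ 2 ≤ a * c := by
  have hform : ∀ x : Fin 2 → ℝ, star x ⬝ᵥ (!![a, b; b, c] *ᵥ x) =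
      a * (x 0 * x 0) + 2 * b * x 0 * x 1 + c * (x 1 * x 1) := fun x => by
    simp [mulVec, dotProduct, Fin.sum_univ_two]
    ring
  have hherm : (!![a, b; b, c] : Matrix (Fin 2) (Fin 2) ℝ).IsHermitian := by
    ext i j
    fin_cases i <;> fin_cases j <;> rfl
  simp only [posSemidef_iff_dotProduct_mulVec, hform, hherm, true_and]
  constructor
  · intro hnonneg
    have hdisc := discrim_le_zero fun u => by simpa using hnonneg ![u, 1]
    simp only [discrim] at hdisc
    exact ⟨by simpa using hnonneg ![1, 0], by simpa using hnonneg ![0, 1], by nlinarith⟩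
  · rintro ⟨ha, hc, hb⟩ x
    have hsq : a * (a * (x 0 * x 0) + 2 * b * x 0 * x 1 + c * (x 1 * x 1)) =
        (a * x 0 + b * x 1) ^ 2 + (a * c - b ^ 2) * x 1 ^ 2 := by ring
    rcases ha.eq_or_lt with rfl | ha
    · obtain rfl : b = 0 := by nlinarith
      simpa using mul_nonneg hc (mul_self_nonneg (x 1))
    · refine nonneg_of_mul_nonneg_right (hsq ▸ ?_) ha
      exact add_nonneg (sq_nonneg _) (mul_nonneg (sub_nonneg.2 hb) (sq_nonneg _))

lemma exists_posSemidef_fin_two_with_trace_iff (s b : ℝ) :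
    (∃ y, (!![s - y, b; b, y] : Matrix (Fin 2) (Fin 2) ℝ).PosSemidef) ↔ 2 * |b| ≤ s := by
  simp only [posSemidef_fin_two_iff]
  constructor
  · rintro ⟨y, hsy, hy, hb⟩
    -- AM-GM: `4 (s - y) y ≤ s ^ 2`
    have hsq : (2 * |b|) ^ 2 ≤ s ^ 2 := by nlinarith [sq_abs b, sq_nonneg (s - 2 * y)]
    exact abs_le_of_sq_le_sq' hsq (by linarith) |>.2
  · intro hs
    refine ⟨s / 2, by linarith [abs_nonneg b], by linarith [abs_nonneg b], ?_⟩
    nlinarith [sq_abs b, abs_nonneg b]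

end Matrix

lemma abs_add_abs_le_iff {α : Type*} [AddCommGroup α] [LinearOrder α] [IsOrderedAddMonoid α]
    {a b c : α} : |a| + |b| ≤ c ↔ |a + b| ≤ c ∧ |a - b| ≤ c := by
  refine ⟨fun h => ⟨(abs_add_le a b).trans h, (abs_sub a b).trans h⟩, fun ⟨hadd, hsub⟩ => ?_⟩
  rw [abs_le] at hadd hsub
  rcases abs_cases a with ⟨ha, -⟩ | ⟨ha, -⟩ <;> rcases abs_cases b with ⟨hb, -⟩ | ⟨hb, -⟩ <;> grind

lemma two_mul_abs_mul_le_one_sub_sq_sub_sq_iff (a b : ℝ) :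
    2 * |a * b| ≤ 1 - a ^ 2 - b ^ 2 ↔ |a + b| ≤ 1 ∧ |a - b| ≤ 1 := by
  have hsq : (|a| + |b|) ^ 2 = a ^ 2 + b ^ 2 + 2 * |a * b| := by
    rw [add_sq, sq_abs, sq_abs, abs_mul]; ring
  rw [← abs_add_abs_le_iff, ← sq_le_one_iff₀ (by positivity), hsq]
  constructor <;> intro <;> linarith

theorem stmt_6 :
    {p : ℝ × ℝ | ∃ y : ℝ,
      (!![1 - y - p.1 ^ 2, p.1 * p.2; p.1 * p.2, y - p.2 ^ 2] :
        Matrix (Fin 2) (Fin 2) ℝ).PosSemidef} =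
    {p : ℝ × ℝ | |p.1 + p.2| ≤ 1 ∧ |p.1 - p.2| ≤ 1} := by
  ext ⟨x₁, x₂⟩
  have hshift : ∀ y : ℝ, 1 - y - x₁ ^ 2 = (1 - x₁ ^ 2 - x₂ ^ 2) - (y - x₂ ^ 2) := fun y => by ring
  simp only [Set.mem_ofPred_eq, hshift]
  rw [← two_mul_abs_mul_le_one_sub_sq_sub_sq_iff, ← Matrix.exists_posSemidef_fin_two_with_trace_iff]
  exact ⟨fun ⟨y, h⟩ => ⟨y - x₂ ^ 2, h⟩, fun ⟨t, h⟩ => ⟨t + x₂ ^ 2, by simpa using h⟩⟩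
end

section
/- The identity Q(x, x_1) = (1/2) M(x)² + ((1 - x_1² - x_2²)/2) I holds, where Q(x,z) = [[1 + z x_2, z - 2 x_1],[z - 2 x_1, 1 - z x_2]] and M(x) = [[x_1 + x_2, -1],[-1, x_1 - x_2]]. Consequently, if x_1² + x_2² ≤ 1 then Q(x, x_1) ⪰ 0. -/
open scoped ComplexOrder in
theorem Matrix.IsHermitian.posSemidef_smul_sq_add_smul_one {n 𝕜 : Type*} [Fintype n]
    [DecidableEq n] [RCLike 𝕜] {A : Matrix n n 𝕜} (hA : A.IsHermitian) {a b : ℝ}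
    (ha : 0 ≤ a) (hb : 0 ≤ b) : (a • A ^ 2 + b • (1 : Matrix n n 𝕜)).PosSemidef := by
  rw [sq]
  nth_rw 1 [← hA.eq]
  exact ((posSemidef_conjTranspose_mul_self A).smul ha).add (PosSemidef.one.smul hb)

theorem stmt_8 (x₁ x₂ : ℝ) :
    (!![1 + x₁ * x₂, x₁ - 2 * x₁; x₁ - 2 * x₁, 1 - x₁ * x₂] : Matrix (Fin 2) (Fin 2) ℝ) =
      (1 / 2 : ℝ) • (!![x₁ + x₂, -1; -1, x₁ - x₂] : Matrix (Fin 2) (Fin 2) ℝ) ^ 2 +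
      ((1 - x₁ ^ 2 - x₂ ^ 2) / 2) • (1 : Matrix (Fin 2) (Fin 2) ℝ) ∧
    (x₁ ^ 2 + x₂ ^ 2 ≤ 1 →
      (!![1 + x₁ * x₂, x₁ - 2 * x₁; x₁ - 2 * x₁, 1 - x₁ * x₂] :
        Matrix (Fin 2) (Fin 2) ℝ).PosSemidef) := by
  have hQ : (!![1 + x₁ * x₂, x₁ - 2 * x₁; x₁ - 2 * x₁, 1 - x₁ * x₂] : Matrix (Fin 2) (Fin 2) ℝ) =
      (1 / 2 : ℝ) • (!![x₁ + x₂, -1; -1, x₁ - x₂] : Matrix (Fin 2) (Fin 2) ℝ) ^ 2 +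
      ((1 - x₁ ^ 2 - x₂ ^ 2) / 2) • (1 : Matrix (Fin 2) (Fin 2) ℝ) := by
    rw [sq, Matrix.mul_fin_two, Matrix.one_fin_two]
    simp only [Matrix.smul_of, Matrix.smul_cons, Matrix.smul_empty, smul_eq_mul, Matrix.of_add_of,
      Matrix.cons_add_cons, Matrix.empty_add_empty, EmbeddingLike.apply_eq_iff_eq,
      Matrix.vecCons_inj, and_true]
    refine ⟨⟨?_, ?_⟩, ?_, ?_⟩ <;> ring
  have hM : (!![x₁ + x₂, -1; -1, x₁ - x₂] : Matrix (Fin 2) (Fin 2) ℝ).IsHermitian := by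
    ext i j
    fin_cases i <;> fin_cases j <;> rfl
  refine ⟨hQ, fun hx => ?_⟩
  rw [hQ]
  exact hM.posSemidef_smul_sq_add_smul_one (by norm_num) (by linarith)
end

section
/- The set {(x_1,x_2) ∈ R² : |x_1 + x_2| ≤ 1 and |x_1 − x_2| ≤ 1} is contained in {(x_1,x_2) ∈ R² : 1 + x_2² − 4 x_1² x_2² ≥ 0}. -/
/-!
With u = x₁ + x₂ and v = x₁ - x₂ one has 4 x₁ x₂ = u² - v², a difference of two numbers in
[0, 1] on the square, so 16 x₁² x₂² ≤ 1. Hence 4 x₁² x₂² ≤ 1/4 < 1 + x₂².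
-/

theorem abs_four_mul_mul_le_one {α : Type*} [CommRing α] [LinearOrder α] [IsStrictOrderedRing α]
    {x y : α} (h₁ : |x + y| ≤ 1) (h₂ : |x - y| ≤ 1) : |4 * (x * y)| ≤ 1 := by
  have hpolar : 4 * (x * y) = (x + y) ^ 2 - (x - y) ^ 2 := by ring
  rw [hpolar]
  exact abs_sub_le_of_nonneg_of_le (sq_nonneg _) ((sq_le_one_iff_abs_le_one _).2 h₁)
    (sq_nonneg _) ((sq_le_one_iff_abs_le_one _).2 h₂)

theorem stmt_9 :
    {p : ℝ × ℝ | |p.1 + p.2| ≤ 1 ∧ |p.1 - p.2| ≤ 1} ⊆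
    {p : ℝ × ℝ | 1 + p.2 ^ 2 - 4 * p.1 ^ 2 * p.2 ^ 2 ≥ 0} := by
  rintro ⟨x, y⟩ ⟨h₁, h₂⟩
  have hsq : (4 * (x * y)) ^ 2 ≤ 1 := (sq_le_one_iff_abs_le_one _).2 (abs_four_mul_mul_le_one h₁ h₂)
  change 1 + y ^ 2 - 4 * x ^ 2 * y ^ 2 ≥ 0
  nlinarith [sq_nonneg y]
end

section
/- Define the set S_Q = {(x,z) ∈ R² : |x − z(z² − 1)| ≤ 1/4 and |z| ≤ 3/2}. Then the projection of S_Q onto the x-coordinate equals the interval [−17/8, 17/8], and for every x ∈ [−1,1] there exists z with (x,z) in the interior of S_Q, yet there is no continuous map φ : [−1,1] → R with (x, φ(x)) ∈ S_Q for all x ∈ [−1,1]. -/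
/-!
The band is symmetric under `(x, z) ↦ (-x, -z)`. Over `x = 1` it only contains points with
`z > 1/2`, over `x = -1` only points with `z < -1/2`; but over the height `z = -1/2` it only
contains points with `x ≥ 1/8`, and over `z = 1/2` only points with `x ≤ -1/8`. A continuous
selection `φ` on `[-1, 1]` would reach the value `-1/2` at some `p` and afterwards the value
`1/2` at some `q ≥ p`, forcing `1/8 ≤ p ≤ q ≤ -1/8`.
-/

open Set

theorem ContinuousOn.exists_le_apply_eq_apply_eq {α δ : Type*} [ConditionallyCompleteLinearOrder α]
    [TopologicalSpace α] [OrderTopology α] [DenselyOrdered α] [LinearOrder δ] [TopologicalSpace δ]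
    [OrderClosedTopology δ] {f : α → δ} {a b : α} {c d : δ} (hab : a ≤ b)
    (hf : ContinuousOn f (Icc a b)) (hc : f a ≤ c) (hcd : c ≤ d) (hd : d ≤ f b) :
    ∃ p q, a ≤ p ∧ p ≤ q ∧ q ≤ b ∧ f p = c ∧ f q = d := by
  obtain ⟨p, hp, rfl⟩ := intermediate_value_Icc hab hf ⟨hc, hcd.trans hd⟩
  obtain ⟨q, hq, rfl⟩ :=
    intermediate_value_Icc hp.2 (hf.mono (Icc_subset_Icc_left hp.1)) ⟨hcd, hd⟩
  exact ⟨p, q, hp.1, hq.1, hq.2, rfl, rfl⟩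

theorem exists_mem_Icc_abs_sub_le {a b ε x : ℝ} (hab : a ≤ b) (hε : 0 ≤ ε)
    (hx : x ∈ Icc (a - ε) (b + ε)) :
    ∃ y ∈ Icc a b, |x - y| ≤ ε := by
  obtain ⟨hxa, hxb⟩ := hx
  by_cases ha : x < a
  · exact ⟨a, left_mem_Icc.2 hab, by rw [abs_le]; constructor <;> linarith⟩
  by_cases hb : b < x
  · exact ⟨b, right_mem_Icc.2 hab, by rw [abs_le]; constructor <;> linarith⟩
  rw [not_lt] at ha hb
  exact ⟨x, ⟨ha, hb⟩, by simpa using hε⟩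

def cubic (z : ℝ) : ℝ := z * (z ^ 2 - 1)

@[fun_prop]
theorem continuous_cubic : Continuous cubic := by
  unfold cubic
  fun_prop

theorem cubic_neg (z : ℝ) : cubic (-z) = -cubic z := by
  unfold cubic
  ring

theorem surjOn_cubic_Icc {r : ℝ} (hr : 0 ≤ r) :
    SurjOn cubic (Icc (-r) r) (Icc (-cubic r) (cubic r)) := by
  rw [← cubic_neg]
  exact intermediate_value_Icc (by linarith) continuous_cubic.continuousOn

theorem abs_cubic_le {z : ℝ} (hz : |z| ≤ 3 / 2) : |cubic z| ≤ 15 / 8 := by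
  unfold cubic
  obtain ⟨hz₁, hz₂⟩ := abs_le.1 hz
  rw [abs_le]
  constructor
  · nlinarith [mul_nonneg (by linarith : (0 : ℝ) ≤ z + 3 / 2) (sq_nonneg (z - 3 / 4))]
  · nlinarith [mul_nonneg (by linarith : (0 : ℝ) ≤ 3 / 2 - z) (sq_nonneg (z + 3 / 4))]

theorem cubic_lt {z : ℝ} (hz₁ : -(3 / 2) ≤ z) (hz₂ : z ≤ 1 / 2) : cubic z < 3 / 4 := by
  unfold cubic
  nlinarith [mul_nonneg (by linarith : (0 : ℝ) ≤ z + 3 / 2) (sq_nonneg (z + 1 / 2)),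
    mul_nonneg (by linarith : (0 : ℝ) ≤ 1 / 2 - z) (sq_nonneg z)]

def cubicBand : Set (ℝ × ℝ) := {p | |p.1 - cubic p.2| ≤ 1 / 4 ∧ |p.2| ≤ 3 / 2}

namespace cubicBand

theorem neg_mem {x z : ℝ} (h : (x, z) ∈ cubicBand) : (-x, -z) ∈ cubicBand := by
  obtain ⟨h₁, h₂⟩ := h
  refine ⟨?_, by rwa [abs_neg]⟩
  rwa [cubic_neg, neg_sub_neg, abs_sub_comm]

theorem fst_image : (fun p : ℝ × ℝ ↦ p.1) '' cubicBand = Icc (-(17 / 8)) (17 / 8) := by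
  ext x
  constructor
  · rintro ⟨⟨x, z⟩, ⟨hx, hz⟩, rfl⟩
    have hxz := abs_le.1 hx
    have hcz := abs_le.1 (abs_cubic_le hz)
    exact ⟨by linarith, by linarith⟩
  · intro hx
    have hcubic : cubic (3 / 2) = 15 / 8 := by norm_num [cubic]
    obtain ⟨y, hy, hxy⟩ := exists_mem_Icc_abs_sub_le (a := -(15 / 8)) (b := 15 / 8) (ε := 1 / 4)
      (by norm_num) (by norm_num) (by convert hx using 2 <;> norm_num)
    obtain ⟨z, hz, rfl⟩ :=
      surjOn_cubic_Icc (r := 3 / 2) (by norm_num) (show y ∈ _ by rwa [hcubic])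
    exact ⟨(x, z), ⟨hxy, abs_le.2 hz⟩, rfl⟩

theorem mem_interior {x z : ℝ} (hx : |x - cubic z| < 1 / 4) (hz : |z| < 3 / 2) :
    (x, z) ∈ interior cubicBand := by
  have hopen : IsOpen {p : ℝ × ℝ | |p.1 - cubic p.2| < 1 / 4 ∧ |p.2| < 3 / 2} :=
    (isOpen_lt (by fun_prop) continuous_const).and (isOpen_lt (by fun_prop) continuous_const)
  refine interior_maximal ?_ hopen ⟨hx, hz⟩
  exact fun p hp ↦ ⟨hp.1.le, hp.2.le⟩

theorem exists_mem_interior {x : ℝ} (hx : x ∈ Icc (-1) 1) : ∃ z, (x, z) ∈ interior cubicBand := by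
  have hcubic : cubic (4 / 3) = 28 / 27 := by norm_num [cubic]
  have hx' : x ∈ Icc (-cubic (4 / 3)) (cubic (4 / 3)) := by
    rw [hcubic]
    exact ⟨by linarith [hx.1], by linarith [hx.2]⟩
  obtain ⟨z, hz, rfl⟩ := surjOn_cubic_Icc (by norm_num) hx'
  refine ⟨z, mem_interior (by simp) ?_⟩
  rw [abs_lt]
  exact ⟨by linarith [hz.1], by linarith [hz.2]⟩

theorem half_lt_of_one_mem {z : ℝ} (h : (1, z) ∈ cubicBand) : 1 / 2 < z := by
  obtain ⟨h₁, h₂⟩ := h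
  by_contra! hz
  linarith [(abs_le.1 h₁).2, cubic_lt (abs_le.1 h₂).1 hz]

theorem lt_neg_half_of_neg_one_mem {z : ℝ} (h : (-1, z) ∈ cubicBand) : z < -(1 / 2) := by
  have := half_lt_of_one_mem (by simpa using neg_mem h)
  linarith

theorem le_of_neg_half_mem {x : ℝ} (h : (x, -(1 / 2)) ∈ cubicBand) : 1 / 8 ≤ x := by
  have := (abs_le.1 h.1).1
  norm_num [cubic] at this
  linarith

theorem le_neg_of_half_mem {x : ℝ} (h : (x, 1 / 2) ∈ cubicBand) : x ≤ -(1 / 8) := by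
  have := le_of_neg_half_mem (neg_mem h)
  linarith

theorem not_exists_continuousOn_selection :
    ¬ ∃ φ : ℝ → ℝ, ContinuousOn φ (Icc (-1) 1) ∧ ∀ x ∈ Icc (-1 : ℝ) 1, (x, φ x) ∈ cubicBand := by
  rintro ⟨φ, hφ, hS⟩
  have hneg := lt_neg_half_of_neg_one_mem (hS (-1) (by norm_num))
  have hpos := half_lt_of_one_mem (hS 1 (by norm_num))
  obtain ⟨p, q, hp, hpq, hq, hφp, hφq⟩ :=
    hφ.exists_le_apply_eq_apply_eq (by norm_num) hneg.le (by norm_num) hpos.le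
  have hp' := le_of_neg_half_mem (hφp ▸ hS p ⟨hp, hpq.trans hq⟩)
  have hq' := le_neg_of_half_mem (hφq ▸ hS q ⟨hp.trans hpq, hq⟩)
  linarith

end cubicBand

theorem stmt_10 :
    {x : ℝ | ∃ z : ℝ, (x, z) ∈
        {p : ℝ × ℝ | |p.1 - p.2 * (p.2 ^ 2 - 1)| ≤ 1 / 4 ∧ |p.2| ≤ 3 / 2}} =
      Set.Icc (-(17 / 8) : ℝ) (17 / 8) ∧
    (∀ x ∈ Set.Icc (-1 : ℝ) 1, ∃ z : ℝ, (x, z) ∈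
      interior {p : ℝ × ℝ | |p.1 - p.2 * (p.2 ^ 2 - 1)| ≤ 1 / 4 ∧ |p.2| ≤ 3 / 2}) ∧
    ¬ ∃ φ : ℝ → ℝ, ContinuousOn φ (Set.Icc (-1 : ℝ) 1) ∧
      ∀ x ∈ Set.Icc (-1 : ℝ) 1, (x, φ x) ∈
        {p : ℝ × ℝ | |p.1 - p.2 * (p.2 ^ 2 - 1)| ≤ 1 / 4 ∧ |p.2| ≤ 3 / 2} := by
  refine ⟨?_, fun x hx ↦ cubicBand.exists_mem_interior hx,
    cubicBand.not_exists_continuousOn_selection⟩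
  rw [← cubicBand.fst_image]
  ext x
  exact ⟨fun ⟨z, hz⟩ ↦ ⟨(x, z), hz, rfl⟩, fun ⟨⟨_, z⟩, hz, hx⟩ ↦ ⟨z, hx ▸ hz⟩⟩
end

section
/- For the pencil A(x,y) = [[0, x, 0],[x, y_1, y_2],[0, y_2, x]], there do not exist vectors of polynomials V_{0i}, V_j ∈ R[x]³ (depending only on x, not on y) such that −x² = Σ_i V_{0i}^T V_{0i} + Σ_j V_j^T A(x,y) V_j holds identically in (x, y_1, y_2). -/
/-!
Expanding the quadratic form, `uᵀ A(x,y) u = 2 x u₀ u₁ + x u₂² + y₁ u₁² + 2 y₂ u₁ u₂`.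
Specialise to `x = 1`, `y₂ = 0`: the identity becomes `-1 = c + y₁ ∑ⱼ Vⱼ₁(1)²` for all `y₁`, with `c` independent of `y₁`,
so every `Vⱼ₁(1)` vanishes, and then the right-hand side at `y₁ = 0` is a sum of squares.
-/

open Matrix

lemma pencil_dotProduct_mulVec (x y₁ y₂ : ℝ) (u : Fin 3 → ℝ) :
    u ⬝ᵥ ((!![0, x, 0; x, y₁, y₂; 0, y₂, x] : Matrix (Fin 3) (Fin 3) ℝ) *ᵥ u) =
      2 * x * u 0 * u 1 + x * u 2 ^ 2 + y₁ * u 1 ^ 2 + 2 * y₂ * u 1 * u 2 := by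
  simp only [dotProduct, mulVec, Fin.sum_univ_three, of_apply, cons_val', cons_val_zero,
    cons_val_one, cons_val_two, empty_val', cons_val_fin_one, tail_cons, vecHead]
  ring

lemma eq_zero_of_forall_eq_add_mul {R : Type*} [Ring R] {a b c : R} (h : ∀ t, c = a + t * b) :
    b = 0 := by
  simpa using (h 0).symm.trans (h 1)

theorem stmt_16 :
    ¬ ∃ (N L : ℕ) (V0 : Fin N → Fin 3 → Polynomial ℝ) (V : Fin L → Fin 3 → Polynomial ℝ),
      ∀ x y₁ y₂ : ℝ,
        -x ^ 2 = (∑ i, ∑ j, ((V0 i j).eval x) ^ 2) +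
          ∑ i, (fun j => (V i j).eval x) ⬝ᵥ
            ((!![0, x, 0; x, y₁, y₂; 0, y₂, x] : Matrix (Fin 3) (Fin 3) ℝ) *ᵥ
              (fun j => (V i j).eval x)) := by
  rintro ⟨N, L, V0, V, h⟩
  set s := ∑ i, ∑ j, ((V0 i j).eval 1) ^ 2
  set u : Fin L → Fin 3 → ℝ := fun i j => (V i j).eval 1
  have h_affine : ∀ y₁ : ℝ,
      -1 = (s + ∑ i, (2 * u i 0 * u i 1 + u i 2 ^ 2)) + y₁ * ∑ i, u i 1 ^ 2 := by
    intro y₁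
    have h₁ := h 1 y₁ 0
    rw [one_pow] at h₁
    rw [h₁, add_assoc, Finset.mul_sum, ← Finset.sum_add_distrib]
    refine congrArg (s + ·) (Finset.sum_congr rfl fun i _ => ?_)
    rw [pencil_dotProduct_mulVec]
    ring
  have hu₁ : ∀ i, u i 1 = 0 := fun i => by
    have h_sq := (Finset.sum_eq_zero_iff_of_nonneg fun i _ => sq_nonneg (u i 1)).mp
      (eq_zero_of_forall_eq_add_mul h_affine) i (Finset.mem_univ i)
    exact pow_eq_zero_iff two_ne_zero |>.mp h_sq
  have h_neg := h_affine 0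
  simp only [hu₁, mul_zero, zero_mul, zero_add, add_zero] at h_neg
  have : 0 ≤ s + ∑ i, u i 2 ^ 2 := by positivity
  linarith
end

section
/- Let G(x,y) = diag(y²(1−x²)−1, 2−x²) (2×2 diagonal matrix polynomial in x ∈ R, y ∈ R). If a polynomial g ∈ R[x] can be written as g(x) = σ_0(x,y) + σ_1(x,y)·(y²(1−x²)−1) + σ_2(x,y)·(2−x²) with σ_0, σ_1, σ_2 sums of squares in R[x,y], then σ_1 = 0 and g(x) = s_0(x) + s_2(x)(2−x²) for some sums of squares s_0, s_2 ∈ R[x]. -/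
/-!
For `|x| < 1` the factor `y²(1 - x²) - 1` is positive for large `y`, while `σ₀` and `σ₂ (2 - x²)`
are nonnegative, so the polynomial `y ↦ σ₁(x, y) (y²(1 - x²) - 1)` is bounded above by `g(x)` and
eventually nonnegative. A polynomial bounded in absolute value on a ray is constant, and a
product with the degree-two factor can only be constant if `σ₁(x, ·) = 0`. Hence `σ₁` vanishes
on the box `(-1, 1) × ℝ`, so `σ₁ = 0`, and substituting `y = 0` (which preserves sums of
squares) gives the representation of `g`.
-/

/-- A multivariate polynomial in `ℝ[x,y]` is a sum of squares. -/
def IsSOS2 (p : MvPolynomial (Fin 2) ℝ) : Prop :=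
  ∃ (L : ℕ) (q : Fin L → MvPolynomial (Fin 2) ℝ), p = ∑ i, (q i) ^ 2

/-- A univariate real polynomial is a sum of squares. -/
def IsSOS1 (p : Polynomial ℝ) : Prop :=
  ∃ (L : ℕ) (q : Fin L → Polynomial ℝ), p = ∑ i, (q i) ^ 2

open Polynomial Filter

namespace IsSOS2

variable {p : MvPolynomial (Fin 2) ℝ}

lemma eval_nonneg (h : IsSOS2 p) (v : Fin 2 → ℝ) : 0 ≤ MvPolynomial.eval v p := by
  obtain ⟨L, q, rfl⟩ := h
  simp only [map_sum, map_pow]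
  exact Finset.sum_nonneg fun i _ => sq_nonneg _

lemma map (h : IsSOS2 p) (φ : MvPolynomial (Fin 2) ℝ →ₐ[ℝ] ℝ[X]) : IsSOS1 (φ p) := by
  obtain ⟨L, q, rfl⟩ := h
  exact ⟨L, fun i => φ (q i), by simp only [map_sum, map_pow]⟩

end IsSOS2

namespace Polynomial

variable {𝕜 : Type*} [NormedField 𝕜] [LinearOrder 𝕜] [IsStrictOrderedRing 𝕜] [OrderTopology 𝕜]

theorem eq_zero_of_isBoundedUnder_abs_mul {p q : 𝕜[X]} (hq : 0 < q.degree)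
    (h : IsBoundedUnder (· ≤ ·) atTop fun y => |(p * q).eval y|) : p = 0 := by
  by_contra hp
  have hpq := natDegree_eq_zero_iff_degree_le_zero.2 ((isBoundedUnder_abs_atTop_iff _).1 h)
  rw [natDegree_mul hp (ne_zero_of_degree_gt hq)] at hpq
  have := natDegree_pos_iff_degree_pos.2 hq
  omega

theorem eq_zero_of_mul_sq_sub_one_le {p : 𝕜[X]} {a M : 𝕜} (ha : 0 < a)
    (hp : ∀ y, 0 ≤ p.eval y) (hM : ∀ y, p.eval y * (a * y ^ 2 - 1) ≤ M) : p = 0 := by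
  have hdeg : (C a * X ^ 2 - 1 : 𝕜[X]).degree = 2 := by
    compute_degree!
    exact ha.ne'
  refine eq_zero_of_isBoundedUnder_abs_mul (q := C a * X ^ 2 - 1) (by rw [hdeg]; norm_num)
    ⟨M, ?_⟩
  rw [eventually_map]
  filter_upwards [eventually_ge_atTop (max 1 a⁻¹)] with y hy
  have hay : 1 ≤ a * y ^ 2 := by
    have h1 : 1 ≤ y := le_of_max_le_left hy
    have h2 : 1 ≤ a * y := by
      rw [← inv_mul_le_iff₀ ha, mul_one]
      exact le_of_max_le_right hy
    nlinarith
  have hnn : 0 ≤ p.eval y * (a * y ^ 2 - 1) := mul_nonneg (hp y) (by linarith)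
  simpa [abs_of_nonneg, hnn] using hM y

end Polynomial

namespace MvPolynomial

variable {R : Type*} [CommSemiring R]

noncomputable def sliceAt (x : R) : MvPolynomial (Fin 2) R →ₐ[R] R[X] :=
  aeval ![Polynomial.C x, Polynomial.X]

lemma eval_sliceAt (x y : R) (p : MvPolynomial (Fin 2) R) :
    (sliceAt x p).eval y = eval ![x, y] p := by
  induction p using MvPolynomial.induction_on with
  | C a => simp [sliceAt]
  | add p q hp hq => simp [hp, hq]
  | mul_X p i hp => fin_cases i <;> simp [sliceAt, hp] at hp ⊢

lemma eval_aeval_X_zero (g : R[X]) (v : Fin 2 → R) :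
    eval v (Polynomial.aeval (X 0 : MvPolynomial (Fin 2) R) g) = g.eval (v 0) := by
  simp [← coe_aeval_eq_eval, ← aeval_algHom_apply]

theorem eq_zero_of_eval_mul_sq_sub_one_le {σ : MvPolynomial (Fin 2) ℝ} (M : ℝ → ℝ)
    (hσ : ∀ v, 0 ≤ eval v σ)
    (hM : ∀ x y, x ^ 2 < 1 → eval ![x, y] σ * (y ^ 2 * (1 - x ^ 2) - 1) ≤ M x) :
    σ = 0 := by
  refine funext_set ![Set.Ioo (-1) 1, Set.univ]
    (fun i => by fin_cases i <;> simp [Set.Ioo_infinite, Set.infinite_univ]) fun v hv => ?_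
  have hx : v 0 ^ 2 < 1 := by
    have := hv 0 trivial
    simp only [Matrix.cons_val_zero, Set.mem_Ioo] at this
    nlinarith
  have hslice : sliceAt (v 0) σ = 0 := by
    refine eq_zero_of_mul_sq_sub_one_le (a := 1 - v 0 ^ 2) (M := M (v 0)) (by linarith)
      (fun y => eval_sliceAt _ y σ ▸ hσ _) fun y => ?_
    rw [eval_sliceAt]
    linarith [hM (v 0) y hx]
  have hv : v = ![v 0, v 1] := by ext i; fin_cases i <;> rfl
  rw [hv, ← eval_sliceAt, hslice, Polynomial.eval_zero, map_zero]

end MvPolynomial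

theorem stmt_17 (g : Polynomial ℝ) (σ0 σ1 σ2 : MvPolynomial (Fin 2) ℝ)
    (h0 : IsSOS2 σ0) (h1 : IsSOS2 σ1) (h2 : IsSOS2 σ2)
    (hid : Polynomial.aeval (MvPolynomial.X 0 : MvPolynomial (Fin 2) ℝ) g =
      σ0 + σ1 * ((MvPolynomial.X 1) ^ 2 * (1 - (MvPolynomial.X 0) ^ 2) - 1) +
        σ2 * (2 - (MvPolynomial.X 0) ^ 2)) :
    σ1 = 0 ∧ ∃ s0 s2 : Polynomial ℝ, IsSOS1 s0 ∧ IsSOS1 s2 ∧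
      g = s0 + s2 * (2 - Polynomial.X ^ 2) := by
  have hσ1 : σ1 = 0 := by
    refine MvPolynomial.eq_zero_of_eval_mul_sq_sub_one_le g.eval h1.eval_nonneg fun x y hx => ?_
    have hpt := congrArg (MvPolynomial.eval ![x, y]) hid
    simp only [MvPolynomial.eval_aeval_X_zero, map_add, map_mul, map_sub, map_one, map_pow,
      map_ofNat, MvPolynomial.eval_X, Matrix.cons_val_zero, Matrix.cons_val_one] at hpt
    nlinarith [h0.eval_nonneg ![x, y],
      mul_nonneg (h2.eval_nonneg ![x, y]) (by linarith : 0 ≤ 2 - x ^ 2)]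
  let φ : MvPolynomial (Fin 2) ℝ →ₐ[ℝ] ℝ[X] := MvPolynomial.aeval ![X, 0]
  refine ⟨hσ1, φ σ0, φ σ2, h0.map φ, h2.map φ, ?_⟩
  have h := congrArg φ hid
  rw [hσ1, ← aeval_algHom_apply] at h
  simpa [φ] using h
end
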